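/- Let f, g : ℝⁿ → ℝ be twice continuously differentiable, let Q ⊆ ℝⁿ, and let 0 ≤ i, j ≤ n be integers with i + j ≥ n. If f is non-convex of grade i on Q and g is non-convex of grade j on Q, then the sum f + g is non-convex of grade i + j − n on Q. -/

import Mathlib

open scoped RealInnerProductSpace
open Real Set

/-- `f` is non-convex of grade `τ` on `Q`: at every `x ∈ Q` there is a linear subspace `V`
of dimension at least `τ` on which the Hessian quadratic form of `f` at `x` is nonnegative. -/
def NonconvexOfGrade {n : ℕ} (f : EuclideanSpace ℝ (Fin n) → ℝ)
    (Q : Set (EuclideanSpace ℝ (Fin n))) (τ : ℕ) : Prop :=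
  ∀ x ∈ Q, ∃ V : Submodule ℝ (EuclideanSpace ℝ (Fin n)),
    τ ≤ Module.finrank ℝ V ∧ ∀ h ∈ V, 0 ≤ iteratedFDeriv ℝ 2 f x ![h, h]

/-! The Hessian of `f + g` is the sum of the Hessians, so it is positive semidefinite on the
intersection `V ⊓ W` of subspaces on which those of `f` and `g` are; and by Grassmann's formula
`dim (V ⊓ W) ≥ dim V + dim W - n`. -/

open Module

theorem Submodule.finrank_add_finrank_sub_finrank_le_finrank_inf {K E : Type*} [DivisionRing K]
    [AddCommGroup E] [Module K E] [FiniteDimensional K E] (V W : Submodule K E) :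
    finrank K V + finrank K W - finrank K E ≤ finrank K ↑(V ⊓ W) := by
  have := V.finrank_sup_add_finrank_inf_eq W
  have := (V ⊔ W).finrank_le
  omega

theorem iteratedFDeriv_two_add_nonneg_of_mem_inf {E : Type*} [NormedAddCommGroup E]
    [NormedSpace ℝ E] {f g : E → ℝ} {x : E} (hf : ContDiffAt ℝ 2 f x) (hg : ContDiffAt ℝ 2 g x)
    {V W : Submodule ℝ E} (hfV : ∀ h ∈ V, 0 ≤ iteratedFDeriv ℝ 2 f x ![h, h])
    (hgW : ∀ h ∈ W, 0 ≤ iteratedFDeriv ℝ 2 g x ![h, h]) :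
    ∀ h ∈ V ⊓ W, 0 ≤ iteratedFDeriv ℝ 2 (fun y => f y + g y) x ![h, h] := by
  rintro h ⟨hV, hW⟩
  rw [fun_iteratedFDeriv_add_apply hf hg]
  exact add_nonneg (hfV h hV) (hgW h hW)

theorem sum_nonconvexOfGrade {n : ℕ}
    (f g : EuclideanSpace ℝ (Fin n) → ℝ)
    (hf : ContDiff ℝ 2 f) (hg : ContDiff ℝ 2 g)
    (Q : Set (EuclideanSpace ℝ (Fin n)))
    (i j : ℕ)
    (hfg : NonconvexOfGrade f Q i) (hgg : NonconvexOfGrade g Q j) :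
    NonconvexOfGrade (fun x => f x + g x) Q (i + j - n) := by
  intro x hx
  obtain ⟨V, hV, hfV⟩ := hfg x hx
  obtain ⟨W, hW, hgW⟩ := hgg x hx
  refine ⟨V ⊓ W, ?_,
    iteratedFDeriv_two_add_nonneg_of_mem_inf hf.contDiffAt hg.contDiffAt hfV hgW⟩
  calc i + j - n ≤ finrank ℝ V + finrank ℝ W - finrank ℝ (EuclideanSpace ℝ (Fin n)) := by
        rw [finrank_euclideanSpace_fin]; omega
    _ ≤ finrank ℝ ↑(V ⊓ W) := V.finrank_add_finrank_sub_finrank_le_finrank_inf W
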